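/- Let f3 be the binary morphism with f3(0)=0 and f3(1)=001011, let t be the Thue–Morse word, and let w3 = f3(t). If u is a factor of w3 ending in 11, then there is a unique word v of the form f3(s) for a factor s of t such that u is a suffix of v and u is not a suffix of any proper suffix of v of the form f3(s') (uniqueness of left completions). -/

import Mathlib

/-! In `f3(t)` the factor `11` occurs only at the right end of a block `f3(1)`, so a factor `u`
of `w3` ending in `11` is a suffix of `f3(p)` for a prefix `p` of `t`; a shortest suffix `r` of
`p` with `u` a suffix of `f3(r)` gives a left completion. Uniqueness holds for every `u`, because
the last letter of a block determines the block: if `u` is a suffix of both `f3(s₁)` and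
`f3(s₂)`, then it is already a suffix of `f3(r)` for the longest common suffix `r` of `s₁`
and `s₂`, and `f3(r)` is a suffix of both images. -/

def IsFactor {α : Type*} (u : List α) (w : ℕ → α) : Prop :=
  ∃ i, u = (List.range u.length).map fun j => w (i + j)

def tm : ℕ → Fin 2 := fun n => if (Nat.digits 2 n).sum % 2 = 0 then 0 else 1

def tmPrefix (n : ℕ) : List (Fin 2) := (List.range n).map tm

/-- The morphism `f3(0) = 0`, `f3(1) = 001011`. -/
def f3 : Fin 2 → List (Fin 2) := fun a => if a = 0 then [0] else [0, 0, 1, 0, 1, 1]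

/-- `v` is a left completion of `u`: `v = f3(s)` for a factor `s` of `t`, `u` is a
suffix of `v`, and `u` is not a suffix of any proper suffix of `v` that is an
`f3`-image of a word. -/
def LeftCompletion (u v : List (Fin 2)) : Prop :=
  (∃ s : List (Fin 2), IsFactor s tm ∧ v = s.flatMap f3) ∧ u <:+ v ∧
    ∀ v' : List (Fin 2), v' <:+ v → v' ≠ v →
      (∃ s' : List (Fin 2), v' = s'.flatMap f3) → ¬ u <:+ v'

open List Function

namespace List

variable {α : Type*} {l₁ l₂ l₃ : List α}

theorem IsSuffix.getLast?_eq (h : l₁ <:+ l₂) (hne : l₁ ≠ []) : l₁.getLast? = l₂.getLast? := by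
  rw [getLast?_eq_some_getLast hne, getLast?_eq_some_getLast (h.ne_nil hne), h.getLast hne]

theorem suffix_or_exists_of_suffix_append (h : l₁ <:+ l₂ ++ l₃) :
    l₁ <:+ l₃ ∨ ∃ l, l₁ = l ++ l₃ ∧ l <:+ l₂ := by
  rcases suffix_or_suffix_of_suffix h (suffix_append l₂ l₃) with h' | ⟨l, rfl⟩
  · exact Or.inl h'
  · exact Or.inr ⟨l, rfl, suffix_append_self_iff.mp h⟩

theorem prefix_or_exists_of_prefix_append (h : l₁ <+: l₂ ++ l₃) :
    l₁ <+: l₂ ∨ ∃ l, l₁ = l₂ ++ l ∧ l <+: l₃ := by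
  rcases prefix_or_prefix_of_prefix h (prefix_append l₂ l₃) with h' | ⟨l, rfl⟩
  · exact Or.inl h'
  · exact Or.inr ⟨l, rfl, prefix_self_append_iff.mp h⟩

end List

theorem isFactor_of_infix_map_range {α : Type*} {w : ℕ → α} {s : List α} {n : ℕ}
    (h : s <:+: (List.range n).map w) : IsFactor s w := by
  obtain ⟨k, hk, hs⟩ := infix_iff_getElem?.mp h
  refine ⟨k, ext_getElem (by simp) fun j hj _ => ?_⟩
  simp only [length_map, length_range] at hk
  have hsj := hs j hj
  rw [getElem?_map, getElem?_range (by omega), Option.map_some, Option.some_inj] at hsj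
  simp [← hsj, add_comm]

section Morphism

variable {α β : Type*} {f : α → List β}

def IsMinimalImageSuffix (f : α → List β) (u v : List β) : Prop :=
  (∃ s : List α, v = s.flatMap f) ∧ u <:+ v ∧
    ∀ v', v' <:+ v → v' ≠ v → (∃ s' : List α, v' = s'.flatMap f) → ¬ u <:+ v'

theorem exists_prefix_decomposition_of_prefix_flatMap {P : List β} {s : List α}
    (h : P <+: s.flatMap f) :
    ∃ s₁ s₂ q, s = s₁ ++ s₂ ∧ P = s₁.flatMap f ++ q ∧ q <+: (s₂.take 1).flatMap f := by
  induction s generalizing P with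
  | nil => exact ⟨[], [], [], rfl, by simpa using h, nil_prefix⟩
  | cons a s ih =>
    rcases prefix_or_exists_of_prefix_append h with h' | ⟨P', rfl, h'⟩
    · exact ⟨[], a :: s, P, rfl, rfl, by simpa using h'⟩
    · obtain ⟨s₁, s₂, q, rfl, rfl, hq⟩ := ih h'
      exact ⟨a :: s₁, s₂, q, rfl, by simp, hq⟩

variable (hne : ∀ a, f a ≠ []) (hlast : Injective fun a => (f a).getLast?)
include hne hlast

theorem exists_common_suffix_of_suffix_flatMap {u : List β} {s₁ s₂ : List α}
    (h₁ : u <:+ s₁.flatMap f) (h₂ : u <:+ s₂.flatMap f) :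
    ∃ r, r <:+ s₁ ∧ r <:+ s₂ ∧ u <:+ r.flatMap f := by
  induction s₁ using List.reverseRecOn generalizing u s₂ with
  | nil => exact ⟨[], nil_suffix, nil_suffix, h₁⟩
  | append_singleton p₁ a ih =>
    rcases eq_nil_or_concat' s₂ with rfl | ⟨p₂, b, rfl⟩
    · exact ⟨[], nil_suffix, nil_suffix, h₂⟩
    rw [flatMap_append, flatMap_singleton] at h₁ h₂
    obtain rfl | hab := eq_or_ne a b
    · rcases suffix_or_exists_of_suffix_append h₁ with h | ⟨u', rfl, h₁'⟩
      · exact ⟨[a], suffix_append _ _, suffix_append _ _, by simpa using h⟩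
      · obtain ⟨r, hr₁, hr₂, hu'⟩ := ih h₁' (suffix_append_self_iff.mp h₂)
        exact ⟨r ++ [a], suffix_append_self_iff.mpr hr₁, suffix_append_self_iff.mpr hr₂,
          by simpa using suffix_append_self_iff.mpr hu'⟩
    · obtain rfl : u = [] := by
        by_contra hu
        refine hab (hlast (?_ : (f a).getLast? = (f b).getLast?))
        rw [← getLast?_append_of_ne_nil (p₁.flatMap f) (hne a), ← h₁.getLast?_eq hu,
          h₂.getLast?_eq hu, getLast?_append_of_ne_nil _ (hne b)]
      exact ⟨[], nil_suffix, nil_suffix, nil_suffix⟩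

theorem suffix_of_flatMap_suffix_flatMap {s' s : List α} (h : s'.flatMap f <:+ s.flatMap f) :
    s' <:+ s := by
  obtain ⟨r, ⟨x, rfl⟩, hr, hsub⟩ :=
    exists_common_suffix_of_suffix_flatMap hne hlast (suffix_refl _) h
  have hx : x.flatMap f = [] := by
    have := hsub.length_le
    simp only [flatMap_append, length_append] at this
    exact length_eq_zero_iff.mp (by omega)
  obtain rfl : x = [] := eq_nil_iff_forall_not_mem.mpr fun a ha =>
    hne a (flatMap_eq_nil_iff.mp hx a ha)
  simpa using hr

theorem exists_suffix_isMinimalImageSuffix {u : List β} {s : List α} (h : u <:+ s.flatMap f) :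
    ∃ r, r <:+ s ∧ IsMinimalImageSuffix f u (r.flatMap f) := by
  obtain ⟨r, ⟨hrs, hur⟩, hmin⟩ := (measure List.length).wf.has_min
    {r | r <:+ s ∧ u <:+ r.flatMap f} ⟨s, suffix_refl s, h⟩
  refine ⟨r, hrs, ⟨r, rfl⟩, hur, ?_⟩
  rintro _ hv hvr ⟨r', rfl⟩ hu
  have hr' : r' <:+ r := suffix_of_flatMap_suffix_flatMap hne hlast hv
  have hr'r : r' ≠ r := by rintro rfl; exact hvr rfl
  exact hmin r' ⟨hr'.trans hrs, hu⟩ (lt_of_le_of_ne hr'.length_le (mt hr'.eq_of_length hr'r))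

theorem IsMinimalImageSuffix.unique {u v₁ v₂ : List β} (h₁ : IsMinimalImageSuffix f u v₁)
    (h₂ : IsMinimalImageSuffix f u v₂) : v₁ = v₂ := by
  obtain ⟨⟨s₁, rfl⟩, hu₁, hmin₁⟩ := h₁
  obtain ⟨⟨s₂, rfl⟩, hu₂, hmin₂⟩ := h₂
  obtain ⟨r, hr₁, hr₂, hu⟩ := exists_common_suffix_of_suffix_flatMap hne hlast hu₁ hu₂
  have e₁ : r.flatMap f = s₁.flatMap f := by
    by_contra hne₁; exact hmin₁ _ (hr₁.flatMap f) hne₁ ⟨r, rfl⟩ hu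
  have e₂ : r.flatMap f = s₂.flatMap f := by
    by_contra hne₂; exact hmin₂ _ (hr₂.flatMap f) hne₂ ⟨r, rfl⟩ hu
  rw [← e₁, e₂]

end Morphism

theorem f3_ne_nil : ∀ a, f3 a ≠ [] := by
  decide

theorem f3_getLast?_injective : Injective fun a => (f3 a).getLast? := by
  decide

-- A word ending in `11` cannot end strictly inside a block.
theorem eq_nil_or_eq_f3_of_mem_inits_f3 :
    ∀ b : Fin 2, ∀ q ∈ (f3 b).inits, ([1, 1] <:+ q ∨ q <:+ [1, 1]) → q = [] ∨ q = f3 b := by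
  decide

theorem exists_prefix_eq_flatMap_f3 {P s : List (Fin 2)} (hP : P <+: s.flatMap f3)
    (h11 : [1, 1] <:+ P) : ∃ s₁, s₁ <+: s ∧ P = s₁.flatMap f3 := by
  obtain ⟨s₁, s₂, q, rfl, rfl, hq⟩ := exists_prefix_decomposition_of_prefix_flatMap hP
  have h11q := suffix_or_suffix_of_suffix h11 (suffix_append _ q)
  rcases s₂ with _ | ⟨b, s₃⟩
  · obtain rfl : q = [] := by simpa using hq
    exact ⟨s₁, prefix_append _ _, by simp⟩
  · rcases eq_nil_or_eq_f3_of_mem_inits_f3 b q ((mem_inits _ _).mpr (by simpa using hq)) h11q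
      with rfl | rfl
    · exact ⟨s₁, prefix_append _ _, by simp⟩
    · exact ⟨s₁ ++ [b], by simp, by simp⟩

/-- Every factor of `w3 = f3(t)` ending in `11` has a unique left completion. -/
theorem stmt15 (u : List (Fin 2)) (hu : ∃ n, u <:+: (tmPrefix n).flatMap f3)
    (hsuf : [1, 1] <:+ u) :
    ∃! v : List (Fin 2), LeftCompletion u v := by
  obtain ⟨n, x, y, hxuy⟩ := hu
  obtain ⟨s, hs, hxu⟩ := exists_prefix_eq_flatMap_f3 ⟨y, hxuy⟩ (hsuf.trans (suffix_append x u))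
  obtain ⟨r, hrs, hmin⟩ := exists_suffix_isMinimalImageSuffix f3_ne_nil f3_getLast?_injective
    (hxu ▸ suffix_append x u)
  refine ⟨r.flatMap f3, ⟨⟨r, isFactor_of_infix_map_range (hrs.isInfix.trans hs.isInfix), rfl⟩,
    hmin.2⟩, fun v hv => ?_⟩
  exact (hmin.unique f3_ne_nil f3_getLast?_injective ⟨hv.1.imp fun _ h => h.2, hv.2⟩).symm
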